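/- arXiv:2112.10062 — 8 statements merged into one kernel-verified Lean document; each statement's English description precedes it below -/
import Mathlib

section
/- Let I = (x₁,...,xₘ)(y₁,...,yₙ) in R = k[x₁,...,xₘ,y₁,...,yₙ]. Then depth(R/I) = 1. -/
open MvPolynomial

/-- `rs` is a regular sequence on the ring `A`: the ideal it generates is proper and
each entry is a nonzerodivisor modulo the preceding ones. -/
def IsRegSeq {A : Type*} [CommRing A] (rs : List A) : Prop :=
  Ideal.span {a | a ∈ rs} ≠ ⊤ ∧
  ∀ i : Fin rs.length, ∀ b : A,
    rs.get i * b ∈ Ideal.span {a | a ∈ rs.take i} →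
      b ∈ Ideal.span {a | a ∈ rs.take i}

/-- Depth of the ring `A` with respect to an ideal `m`: the supremum of lengths of
regular sequences contained in `m`. -/
noncomputable def depthAt {A : Type*} [CommRing A] (m : Ideal A) : ℕ :=
  sSup {ℓ : ℕ | ∃ rs : List A, rs.length = ℓ ∧ (∀ a ∈ rs, a ∈ m) ∧ IsRegSeq rs}

/-!
In `A = R/I` the maximal ideal `𝔪` is `P + Q`, with `P`, `Q` the images of the ideals generated
by the `x`- and the `y`-variables. Monomial by monomial one sees `(x) ∩ (y) = I`, so `P ∩ Q = 0`;
and the annihilator of `x₁` lies in `Q`, that of `y₁` in `P`. Hence `x₁ + y₁` is a nonzerodivisor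
and the depth is at least one. Conversely, if `f = p + q` and `g` formed a regular sequence in
`𝔪`, then `PQ = 0` gives `g p, g q ∈ (f)`, so `p = a f`, `q = b f` with `a + b = 1`. As `y₁` kills
`a f` and `x₁` kills `b f`, `a ∈ P` and `b ∈ Q`, so `1 ∈ 𝔪`.
-/

section RegularSequences

variable {A : Type*} [CommRing A]

lemma isRegSeq_singleton {a : A} (hspan : Ideal.span {a} ≠ ⊤)
    (ha : ∀ b, a * b = 0 → b = 0) : IsRegSeq [a] := by
  refine ⟨by simpa using hspan, fun i b hb => ?_⟩
  fin_cases i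
  simpa using ha b (by simpa using hb)

lemma IsRegSeq.eq_zero_of_head_mul {a b : A} {l : List A} (h : IsRegSeq (a :: b :: l)) {c : A}
    (hc : a * c = 0) : c = 0 := by
  simpa using h.2 ⟨0, by simp⟩ c (by simpa using hc)

lemma IsRegSeq.mem_span_head_of_mul {a b : A} {l : List A} (h : IsRegSeq (a :: b :: l)) {c : A}
    (hc : b * c ∈ Ideal.span {a}) : c ∈ Ideal.span {a} := by
  simpa using h.2 ⟨1, by simp⟩ c (by simpa using hc)

end RegularSequences

section DepthOne

variable {A : Type*} [CommRing A] {P Q : Ideal A} {x y : A}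

lemma eq_zero_of_add_mul_eq_zero (hPQ : P ⊓ Q = ⊥) (hx : x ∈ P) (hy : y ∈ Q)
    (hxQ : ∀ b, x * b = 0 → b ∈ Q) (hyP : ∀ b, y * b = 0 → b ∈ P) {b : A}
    (hb : (x + y) * b = 0) : b = 0 := by
  have hyx : y * b = -(x * b) := by linear_combination hb
  have hxb : x * b ∈ P ⊓ Q := ⟨P.mul_mem_right b hx, by
    rw [← neg_neg (x * b), ← hyx]; exact Q.neg_mem (Q.mul_mem_right b hy)⟩
  have hyb : y * b ∈ P ⊓ Q := ⟨hyx ▸ P.neg_mem (P.mul_mem_right b hx), Q.mul_mem_right b hy⟩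
  rw [hPQ, Ideal.mem_bot] at hxb hyb
  have hb : b ∈ P ⊓ Q := ⟨hyP b hyb, hxQ b hxb⟩
  rwa [hPQ, Ideal.mem_bot] at hb

lemma mul_eq_zero_of_inf_eq_bot (hPQ : P ⊓ Q = ⊥) {p q : A} (hp : p ∈ P) (hq : q ∈ Q) :
    p * q = 0 := by
  simpa [hPQ] using Ideal.mul_le_inf (Ideal.mul_mem_mul hp hq)

lemma sup_eq_top_of_isRegSeq (hPQ : P ⊓ Q = ⊥) (hx : x ∈ P) (hy : y ∈ Q)
    (hxQ : ∀ b, x * b = 0 → b ∈ Q) (hyP : ∀ b, y * b = 0 → b ∈ P) {f g : A} {l : List A}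
    (hf : f ∈ P ⊔ Q) (hg : g ∈ P ⊔ Q) (hreg : IsRegSeq (f :: g :: l)) : P ⊔ Q = ⊤ := by
  have hPQ0 {p q : A} (hp : p ∈ P) (hq : q ∈ Q) := mul_eq_zero_of_inf_eq_bot hPQ hp hq
  obtain ⟨p, hp, q, hq, rfl⟩ := Submodule.mem_sup.1 hf
  obtain ⟨p', hp', q', hq', rfl⟩ := Submodule.mem_sup.1 hg
  have hpf : p ∈ Ideal.span {p + q} := hreg.mem_span_head_of_mul <| Ideal.mem_span_singleton'.2
    ⟨p', by linear_combination hPQ0 hp' hq - hPQ0 hp hq'⟩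
  have hqf : q ∈ Ideal.span {p + q} := hreg.mem_span_head_of_mul <| Ideal.mem_span_singleton'.2
    ⟨q', by linear_combination hPQ0 hp hq' - hPQ0 hp' hq⟩
  obtain ⟨a, ha⟩ := Ideal.mem_span_singleton'.1 hpf
  obtain ⟨b, hb⟩ := Ideal.mem_span_singleton'.1 hqf
  -- `f = (a + b) f` forces `a + b = 1`, while `y` kills `a f = p` and `x` kills `b f = q`.
  have hab : a + b - 1 = 0 := hreg.eq_zero_of_head_mul (by linear_combination ha + hb)
  have haP : a ∈ P := hyP a <| hreg.eq_zero_of_head_mul <| by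
    linear_combination y * ha + hPQ0 hp hy
  have hbQ : b ∈ Q := hxQ b <| hreg.eq_zero_of_head_mul <| by
    linear_combination x * hb + hPQ0 hx hq
  rw [Ideal.eq_top_iff_one, show (1 : A) = a + b by linear_combination -hab]
  exact Submodule.add_mem_sup haP hbQ

theorem depthAt_sup_eq_one (hPQ : P ⊓ Q = ⊥) (hx : x ∈ P) (hy : y ∈ Q)
    (hxQ : ∀ b, x * b = 0 → b ∈ Q) (hyP : ∀ b, y * b = 0 → b ∈ P) (htop : P ⊔ Q ≠ ⊤) :
    depthAt (P ⊔ Q) = 1 := by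
  have hxy : x + y ∈ P ⊔ Q := Submodule.add_mem_sup hx hy
  refine IsGreatest.csSup_eq
    ⟨⟨[x + y], rfl, by simpa using hxy, isRegSeq_singleton ?_ ?_⟩, ?_⟩
  · exact ne_top_of_le_ne_top htop ((Ideal.span_singleton_le_iff_mem _).2 hxy)
  · exact fun b => eq_zero_of_add_mul_eq_zero hPQ hx hy hxQ hyP
  · rintro ℓ ⟨_ | ⟨f, _ | ⟨g, l⟩⟩, rfl, hmem, hreg⟩
    · simp
    · simp
    · exact absurd (sup_eq_top_of_isRegSeq hPQ hx hy hxQ hyP (hmem f (by simp))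
        (hmem g (by simp)) hreg) htop

end DepthOne

namespace MvPolynomial

variable {σ R : Type*} [CommSemiring R] {s t : Set σ}

lemma span_X_image_ne_top [Nontrivial R] : Ideal.span (X '' s : Set (MvPolynomial σ R)) ≠ ⊤ :=
  (Ideal.ne_top_iff_one _).2 (by simp [mem_ideal_span_X_image])

lemma mem_span_X_image_of_X_mul_mem {i : σ} (hi : i ∉ t) {p : MvPolynomial σ R}
    (h : X i * p ∈ Ideal.span (X '' t)) : p ∈ Ideal.span (X '' t) := by
  rw [mem_ideal_span_X_image] at h ⊢
  intro μ hμ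
  obtain ⟨j, hj, hμj⟩ := h (Finsupp.single i 1 + μ) (by simpa using hμ)
  have hji : i ≠ j := fun h => hi (h ▸ hj)
  exact ⟨j, hj, by simpa [Finsupp.single_apply, hji] using hμj⟩

lemma single_add_single_le_iff {i j : σ} (hij : i ≠ j) {μ : σ →₀ ℕ} :
    Finsupp.single i 1 + Finsupp.single j 1 ≤ μ ↔ μ i ≠ 0 ∧ μ j ≠ 0 := by
  classical
  simp only [← Nat.one_le_iff_ne_zero]
  refine ⟨fun h => ⟨by simpa [hij] using h i, by simpa [hij] using h j⟩, fun ⟨hi, hj⟩ v => ?_⟩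
  simp only [Finsupp.add_apply, Finsupp.single_apply]
  split_ifs <;> subst_vars <;> first | exact absurd rfl hij | omega

lemma span_X_image_inf_le_mul (hst : Disjoint s t) :
    Ideal.span (X '' s) ⊓ Ideal.span (X '' t) ≤
      (Ideal.span (X '' s) * Ideal.span (X '' t) : Ideal (MvPolynomial σ R)) := by
  rintro p ⟨hs, ht⟩
  rw [SetLike.mem_coe, mem_ideal_span_X_image] at hs ht
  set S : Set (σ →₀ ℕ) := {ν | ∃ i ∈ s, ∃ j ∈ t, ν = Finsupp.single i 1 + Finsupp.single j 1}
  have hS : p ∈ Ideal.span ((fun ν => monomial ν (1 : R)) '' S) := by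
    refine mem_ideal_span_monomial_image.2 fun μ hμ => ?_
    obtain ⟨i, hi, hμi⟩ := hs μ hμ
    obtain ⟨j, hj, hμj⟩ := ht μ hμ
    exact ⟨_, ⟨i, hi, j, hj, rfl⟩, (single_add_single_le_iff (hst.ne_of_mem hi hj)).2 ⟨hμi, hμj⟩⟩
  rw [Ideal.span_mul_span]
  refine Ideal.span_mono ?_ hS
  rintro _ ⟨_, ⟨i, hi, j, hj, rfl⟩, rfl⟩
  exact ⟨X i, ⟨i, hi, rfl⟩, X j, ⟨j, hj, rfl⟩, by simp [X, monomial_mul]⟩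

end MvPolynomial

namespace Ideal

variable {R : Type*} [CommRing R] {I J K : Ideal R}

lemma map_mk_ne_top (hIJ : I ≤ J) (hJ : J ≠ ⊤) : J.map (Quotient.mk I) ≠ ⊤ := by
  rwa [Ne, eq_top_iff_one, ← map_one (Quotient.mk I), mem_quotient_iff_mem hIJ, ← eq_top_iff_one]

lemma map_mk_inf_map_mk_eq_bot (hIJ : I ≤ J) (hIK : I ≤ K) (hJK : J ⊓ K ≤ I) :
    J.map (Quotient.mk I) ⊓ K.map (Quotient.mk I) = ⊥ := by
  refine eq_bot_iff.2 fun b ⟨hbJ, hbK⟩ => ?_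
  obtain ⟨p, rfl⟩ := Quotient.mk_surjective b
  rw [SetLike.mem_coe, mem_quotient_iff_mem hIJ] at hbJ
  rw [SetLike.mem_coe, mem_quotient_iff_mem hIK] at hbK
  exact Quotient.eq_zero_iff_mem.2 (hJK ⟨hbJ, hbK⟩)

end Ideal

section CompleteBipartite

variable {σ R : Type*} [CommRing R] {s t : Set σ} {I : Ideal (MvPolynomial σ R)}

lemma MvPolynomial.mem_map_span_X_image_of_mk_X_mul_eq_zero (hI : I ≤ Ideal.span (X '' t))
    {i : σ} (hi : i ∉ t) {b : MvPolynomial σ R ⧸ I} (hb : Ideal.Quotient.mk I (X i) * b = 0) :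
    b ∈ (Ideal.span (X '' t)).map (Ideal.Quotient.mk I) := by
  obtain ⟨p, rfl⟩ := Ideal.Quotient.mk_surjective b
  rw [← map_mul, Ideal.Quotient.eq_zero_iff_mem] at hb
  exact (Ideal.mem_quotient_iff_mem hI).2 (mem_span_X_image_of_X_mul_mem hi (hI hb))

theorem depthAt_quotient_span_X_image_mul_span_X_image [Nontrivial R] (hst : IsCompl s t)
    (hs : s.Nonempty) (ht : t.Nonempty) (hI : I = Ideal.span (X '' s) * Ideal.span (X '' t)) :
    depthAt (Ideal.span (Set.range fun v => Ideal.Quotient.mk I (X v))) = 1 := by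
  have hIs : I ≤ Ideal.span (X '' s) := hI ▸ Ideal.mul_le_left
  have hIt : I ≤ Ideal.span (X '' t) := hI ▸ Ideal.mul_le_right
  have hvars : Ideal.span (Set.range fun v => Ideal.Quotient.mk I (X v)) =
      (Ideal.span (X '' s) ⊔ Ideal.span (X '' t)).map (Ideal.Quotient.mk I) := by
    rw [← Ideal.span_union, ← Set.image_union, show s ∪ t = Set.univ from hst.sup_eq_top,
      Set.image_univ, Ideal.map_span, ← Set.range_comp]
    rfl
  obtain ⟨i, hi⟩ := hs
  obtain ⟨j, hj⟩ := ht
  rw [hvars, Ideal.map_sup]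
  refine depthAt_sup_eq_one (x := Ideal.Quotient.mk I (X i)) (y := Ideal.Quotient.mk I (X j))
    (Ideal.map_mk_inf_map_mk_eq_bot hIs hIt (hI ▸ span_X_image_inf_le_mul hst.disjoint))
    (Ideal.mem_map_of_mem _ (Ideal.subset_span ⟨i, hi, rfl⟩))
    (Ideal.mem_map_of_mem _ (Ideal.subset_span ⟨j, hj, rfl⟩))
    (fun _ => mem_map_span_X_image_of_mk_X_mul_eq_zero hIt (hst.disjoint.notMem_of_mem_left hi))
    (fun _ => mem_map_span_X_image_of_mk_X_mul_eq_zero hIs (hst.disjoint.notMem_of_mem_right hj))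
    ?_
  rw [← Ideal.map_sup, ← Ideal.span_union, ← Set.image_union]
  exact Ideal.map_mk_ne_top (hIs.trans (Ideal.span_mono (Set.image_mono Set.subset_union_left)))
    span_X_image_ne_top

end CompleteBipartite

/-- For `I = (x₁,…,xₘ)(y₁,…,yₙ)` in `R = k[x₁,…,xₘ,y₁,…,yₙ]` (`m, n ≥ 1`),
`depth R/I = 1` (depth at the irrelevant maximal ideal). -/
theorem stmt3 (k : Type*) [Field k] (m n : ℕ) (hm : 1 ≤ m) (hn : 1 ≤ n)
    (I : Ideal (MvPolynomial (Fin m ⊕ Fin n) k))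
    (hI : I = Ideal.span {f | ∃ (i : Fin m) (j : Fin n),
      f = X (Sum.inl i) * X (Sum.inr j)}) :
    depthAt (Ideal.span (Set.range fun v => Ideal.Quotient.mk I (X v))) = 1 := by
  refine depthAt_quotient_span_X_image_mul_span_X_image Set.isCompl_range_inl_range_inr
    ⟨Sum.inl ⟨0, hm⟩, by simp⟩ ⟨Sum.inr ⟨0, hn⟩, by simp⟩ ?_
  rw [hI, Ideal.span_mul_span]
  congr 1
  ext f
  simp [Set.mem_mul, eq_comm]
end

section
/- Let G be a bipartite graph without isolated vertices. Then G is unmixed (all minimal vertex covers have the same cardinality) if and only if the two parts can be labeled V₁ = {x₁,...,xₙ} and V₂ = {y₁,...,yₙ} (in particular they have equal size) such that: (1) {x_i, y_i} ∈ E(G) for all 1 ≤ i ≤ n, and (2) whenever {x_i, y_j} and {x_j, y_k} are edges of G for distinct i, j, k, then {x_i, y_k} is also an edge of G. -/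
/-- `C` is a vertex cover of `G`. -/
def IsVC {V : Type*} (G : SimpleGraph V) (C : Finset V) : Prop :=
  ∀ u v : V, G.Adj u v → u ∈ C ∨ v ∈ C

/-- `C` is a minimal vertex cover of `G`. -/
def IsMinVC {V : Type*} (G : SimpleGraph V) (C : Finset V) : Prop :=
  IsVC G C ∧ ∀ D ⊆ C, IsVC G D → D = C

lemma exists_minVC_subset {V : Type*} [DecidableEq V] (G : SimpleGraph V)
    (C : Finset V) (hC : IsVC G C) : ∃ D, D ⊆ C ∧ IsMinVC G D := by
  induction C using Finset.strongInductionOn with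
  | _ C ih =>
    by_cases h : ∃ D, D ⊂ C ∧ IsVC G D
    · obtain ⟨D, hDC, hD⟩ := h
      obtain ⟨E, hED, hE⟩ := ih D hDC hD
      exact ⟨E, hED.trans hDC.subset, hE⟩
    · push_neg at h
      refine ⟨C, subset_rfl, hC, fun D hD hDvc => ?_⟩
      by_contra hne
      exact h D (Finset.ssubset_iff_subset_ne.2 ⟨hD, hne⟩) hDvc

lemma crit_edge {V : Type*} [DecidableEq V] {G : SimpleGraph V} {D : Finset V}
    (hD : IsMinVC G D) {v : V} (hv : v ∈ D) : ∃ w, G.Adj v w ∧ w ∉ D := by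
  have hne : ¬ IsVC G (D.erase v) := by
    intro hvc
    have heq := hD.2 (D.erase v) (Finset.erase_subset _ _) hvc
    have hv' : v ∈ D.erase v := by rw [heq]; exact hv
    exact Finset.notMem_erase v D hv'
  unfold IsVC at hne
  push_neg at hne
  obtain ⟨u, w, huw, hu, hw⟩ := hne
  rcases hD.1 u w huw with huD | hwD
  · have hu' : u = v := by
      by_contra h'
      exact hu (Finset.mem_erase.2 ⟨h', huD⟩)
    refine ⟨w, hu' ▸ huw, ?_⟩
    intro hwD
    have : w = v := by
      by_contra h'
      exact hw (Finset.mem_erase.2 ⟨h', hwD⟩)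
    exact G.ne_of_adj huw (hu'.trans this.symm)
  · have hw' : w = v := by
      by_contra h'
      exact hw (Finset.mem_erase.2 ⟨h', hwD⟩)
    refine ⟨u, (hw' ▸ huw).symm, ?_⟩
    intro huD
    have : u = v := by
      by_contra h'
      exact hu (Finset.mem_erase.2 ⟨h', huD⟩)
    exact G.ne_of_adj huw (this.trans hw'.symm)

lemma key_count {V : Type*} [Fintype V] [DecidableEq V] {G : SimpleGraph V}
    {n : ℕ} {x y : Fin n → V} (hxinj : Function.Injective x) (hyinj : Function.Injective y)
    (hsep : ∀ i j, x i ≠ y j) (hadj : ∀ i, G.Adj (x i) (y i))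
    {D : Finset V} (hD : IsVC G D) :
    n ≤ D.card ∧ (D.card = n → ∀ i, ¬(x i ∈ D ∧ y i ∈ D)) := by
  classical
  set c : Fin n → V := fun i => if x i ∈ D then x i else y i with hc
  have hcmem : ∀ i, c i ∈ D := by
    intro i
    by_cases hx : x i ∈ D
    · simpa [hc, hx] using hx
    · have := hD _ _ (hadj i)
      simp only [hc, hx, if_false]
      tauto
  have hcxy : ∀ i, c i = x i ∨ c i = y i := by
    intro i; by_cases hx : x i ∈ D <;> simp [hc, hx]
  have hcinj : Function.Injective c := by
    intro i j hij
    rcases hcxy i with h1 | h1 <;> rcases hcxy j with h2 | h2 <;> rw [h1, h2] at hij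
    · exact hxinj hij
    · exact absurd hij (hsep i j)
    · exact absurd hij.symm (hsep j i)
    · exact hyinj hij
  have hsub : Finset.univ.image c ⊆ D := fun v hv => by
    obtain ⟨i, _, hi⟩ := Finset.mem_image.1 hv
    exact hi ▸ hcmem i
  have hcard : (Finset.univ.image c).card = n := by
    rw [Finset.card_image_of_injective _ hcinj, Finset.card_univ, Fintype.card_fin]
  constructor
  · calc n = (Finset.univ.image c).card := hcard.symm
      _ ≤ D.card := Finset.card_le_card hsub
  · intro hDn i ⟨hxD, hyD⟩
    have hDeq : D = Finset.univ.image c :=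
      (Finset.eq_of_subset_of_card_le hsub (by rw [hcard, hDn])).symm
    have hx' : c i = x i := by
      rw [hDeq] at hxD
      obtain ⟨j, _, hj⟩ := Finset.mem_image.1 hxD
      rcases hcxy j with h | h
      · rw [h] at hj; have := hxinj hj; subst this; exact h
      · rw [h] at hj; exact absurd hj.symm (hsep i j)
    have hy' : c i = y i := by
      rw [hDeq] at hyD
      obtain ⟨j, _, hj⟩ := Finset.mem_image.1 hyD
      rcases hcxy j with h | h
      · rw [h] at hj; exact absurd hj (hsep j i)
      · rw [h] at hj; have := hyinj hj; subst this; exact h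
    exact hsep i i (hx' ▸ hy')


/-- Villarreal's characterization: a bipartite graph `G` without isolated vertices is
unmixed iff its parts can be labeled `x₁,…,xₙ` and `y₁,…,yₙ` so that
(1) `{xᵢ, yᵢ} ∈ E(G)` for all `i`, and (2) if `{xᵢ, y_j}` and `{x_j, y_k}` are edges
for distinct `i, j, k`, then `{xᵢ, y_k}` is an edge. -/
theorem stmt5 {V : Type*} [Fintype V] [DecidableEq V] (G : SimpleGraph V)
    (V₁ V₂ : Set V)
    (hpart : V₁ ∪ V₂ = Set.univ) (hdisj : V₁ ∩ V₂ = ∅)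
    (hbip : ∀ u v : V, G.Adj u v → (u ∈ V₁ ∧ v ∈ V₂) ∨ (u ∈ V₂ ∧ v ∈ V₁))
    (hiso : ∀ v : V, ∃ u : V, G.Adj v u) :
    (∀ C D : Finset V, IsMinVC G C → IsMinVC G D → C.card = D.card) ↔
    ∃ (n : ℕ) (x y : Fin n → V),
      Function.Injective x ∧ Function.Injective y ∧
      Set.range x = V₁ ∧ Set.range y = V₂ ∧
      (∀ i : Fin n, G.Adj (x i) (y i)) ∧
      (∀ i j l : Fin n, i ≠ j → j ≠ l → i ≠ l →
        G.Adj (x i) (y j) → G.Adj (x j) (y l) → G.Adj (x i) (y l)) := by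
  classical
  have hV1 : ∀ v ∈ V₁, v ∉ V₂ := fun v h1 h2 => by
    have hv : v ∈ V₁ ∩ V₂ := ⟨h1, h2⟩
    rw [hdisj] at hv; exact hv
  constructor
  · intro h
    set F₁ := (Set.toFinite V₁).toFinset with hF₁
    set F₂ := (Set.toFinite V₂).toFinset with hF₂
    have hmF1 : ∀ v, v ∈ F₁ ↔ v ∈ V₁ := fun v => Set.Finite.mem_toFinset _
    have hmF2 : ∀ v, v ∈ F₂ ↔ v ∈ V₂ := fun v => Set.Finite.mem_toFinset _
    have hsideMin : ∀ (A B : Set V) (FA : Finset V), (∀ v, v ∈ FA ↔ v ∈ A) →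
        (∀ u v, G.Adj u v → ((u ∈ A ∧ v ∈ B) ∨ (u ∈ B ∧ v ∈ A))) →
        (∀ v ∈ A, v ∉ B) → IsMinVC G FA := by
      intro A B FA hmem hbip' hAB
      constructor
      · intro u v huv
        rcases hbip' u v huv with ⟨h1, _⟩ | ⟨_, h1⟩
        · exact Or.inl ((hmem u).2 h1)
        · exact Or.inr ((hmem v).2 h1)
      · intro D hsub hDvc
        refine Finset.Subset.antisymm hsub (fun u huFA => ?_)
        have huA : u ∈ A := (hmem u).1 huFA
        obtain ⟨w, hw⟩ := hiso u
        have hwB : w ∈ B := by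
          rcases hbip' u w hw with ⟨_, h1⟩ | ⟨h1, _⟩
          · exact h1
          · exact (hAB u huA h1).elim
        rcases hDvc u w hw with h' | h'
        · exact h'
        · exact (hAB w ((hmem w).1 (hsub h')) hwB).elim
    have hmin1 : IsMinVC G F₁ := hsideMin V₁ V₂ F₁ hmF1 hbip hV1
    have hmin2 : IsMinVC G F₂ := hsideMin V₂ V₁ F₂ hmF2
      (fun u v huv => (hbip u v huv).symm) (fun v h2 h1 => hV1 v h1 h2)
    have h12 : F₁.card = F₂.card := h F₁ F₂ hmin1 hmin2
    haveI : Fintype ↥V₁ := (Set.toFinite V₁).fintype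
    haveI : Fintype ↥V₂ := (Set.toFinite V₂).fintype
    have hc1 : Fintype.card ↥V₁ = F₁.card := ((Set.toFinite V₁).card_toFinset).symm
    have hc2 : Fintype.card ↥V₂ = F₂.card := ((Set.toFinite V₂).card_toFinset).symm
    set t : ↥V₁ → Finset V := fun a => (Set.toFinite {v | G.Adj (a : V) v}).toFinset with ht
    have hmt : ∀ (a : ↥V₁) (v : V), v ∈ t a ↔ G.Adj (a : V) v := fun a v =>
      Set.Finite.mem_toFinset _
    have hHall : ∀ s : Finset ↥V₁, s.card ≤ (s.biUnion t).card := by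
      intro s
      set A : Finset V := s.image (fun a : ↥V₁ => (a : V)) with hA
      set N : Finset V := s.biUnion t with hN
      have hAsub : A ⊆ F₁ := by
        intro v hv
        obtain ⟨a, _, hav⟩ := Finset.mem_image.1 hv
        rw [← hav]
        exact (hmF1 _).2 a.2
      have hCvc : IsVC G ((F₁ \ A) ∪ N) := by
        intro u v huv
        rcases hbip u v huv with ⟨hu1, hv2⟩ | ⟨hu2, hv1⟩
        · by_cases hu : u ∈ A
          · refine Or.inr (Finset.mem_union_right _ ?_)
            obtain ⟨a, ha, hav⟩ := Finset.mem_image.1 hu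
            subst hav
            exact Finset.mem_biUnion.2 ⟨a, ha, (hmt a v).2 huv⟩
          · exact Or.inl (Finset.mem_union_left _ (Finset.mem_sdiff.2 ⟨(hmF1 u).2 hu1, hu⟩))
        · by_cases hv : v ∈ A
          · refine Or.inl (Finset.mem_union_right _ ?_)
            obtain ⟨a, ha, hav⟩ := Finset.mem_image.1 hv
            subst hav
            exact Finset.mem_biUnion.2 ⟨a, ha, (hmt a u).2 huv.symm⟩
          · exact Or.inr (Finset.mem_union_left _ (Finset.mem_sdiff.2 ⟨(hmF1 v).2 hv1, hv⟩))
      obtain ⟨D, hDsub, hDmin⟩ := exists_minVC_subset G _ hCvc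
      have hDcard : D.card = F₁.card := h D F₁ hDmin hmin1
      have h1 : F₁.card ≤ (F₁ \ A).card + N.card := by
        calc F₁.card = D.card := hDcard.symm
          _ ≤ ((F₁ \ A) ∪ N).card := Finset.card_le_card hDsub
          _ ≤ _ := Finset.card_union_le _ _
      have h2 : (F₁ \ A).card = F₁.card - A.card := Finset.card_sdiff_of_subset hAsub
      have h3 : A.card ≤ F₁.card := Finset.card_le_card hAsub
      have h4 : A.card = s.card := by
        rw [hA]
        exact Finset.card_image_of_injective _ (fun a b hab => Subtype.coe_injective hab)
      omega
    obtain ⟨f, hfinj, hf⟩ := (Finset.all_card_le_biUnion_card_iff_exists_injective t).1 hHall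
    have hfadj : ∀ a : ↥V₁, G.Adj (a : V) (f a) := fun a => (hmt a (f a)).1 (hf a)
    have hf2 : ∀ a, f a ∈ V₂ := by
      intro a
      rcases hbip _ _ (hfadj a) with ⟨_, h2⟩ | ⟨h2, _⟩
      · exact h2
      · exact (hV1 _ a.2 h2).elim
    set f' : ↥V₁ → ↥V₂ := fun a => ⟨f a, hf2 a⟩ with hf'
    have hf'inj : Function.Injective f' := fun a b hab =>
      hfinj (congrArg Subtype.val hab)
    have hf'bij : Function.Bijective f' :=
      (Fintype.bijective_iff_injective_and_card f').2 ⟨hf'inj, by rw [hc1, hc2, h12]⟩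
    set n := F₁.card with hn
    have hcn : Fintype.card ↥V₁ = n := hc1
    set e : Fin n ≃ ↥V₁ := (Fintype.equivFinOfCardEq hcn).symm with he
    set x0 : Fin n → V := fun i => ((e i : ↥V₁) : V) with hx0
    set y0 : Fin n → V := fun i => ((f' (e i) : ↥V₂) : V) with hy0
    have hx0inj : Function.Injective x0 := fun i j hij =>
      e.injective (Subtype.coe_injective hij)
    have hy0inj : Function.Injective y0 := fun i j hij =>
      e.injective (hf'inj (Subtype.coe_injective hij))
    have hrx : Set.range x0 = V₁ := by
      ext v
      constructor
      · rintro ⟨i, rfl⟩; exact (e i).2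
      · intro hv; exact ⟨e.symm ⟨v, hv⟩, by simp [hx0]⟩
    have hry : Set.range y0 = V₂ := by
      ext v
      constructor
      · rintro ⟨i, rfl⟩; exact (f' (e i)).2
      · intro hv
        obtain ⟨a, ha⟩ := hf'bij.2 ⟨v, hv⟩
        refine ⟨e.symm a, ?_⟩
        show ((f' (e (e.symm a)) : ↥V₂) : V) = v
        rw [Equiv.apply_symm_apply, ha]
    have hadj0 : ∀ i, G.Adj (x0 i) (y0 i) := fun i => hfadj (e i)
    have hsep : ∀ a b, x0 a ≠ y0 b := fun a b heq =>
      hV1 (x0 a) ((e a).2) (by rw [heq]; exact (f' (e b)).2)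
    refine ⟨n, x0, y0, hx0inj, hy0inj, hrx, hry, hadj0, ?_⟩
    intro i j l _ _ _ e1 e2
    by_contra hne
    have hC0vc : IsVC G (Finset.univ \ {x0 i, y0 l}) := by
      intro u v huv
      by_contra hcon
      push_neg at hcon
      obtain ⟨hu, hv⟩ := hcon
      simp only [Finset.mem_sdiff, Finset.mem_univ, true_and, not_not, Finset.mem_insert,
        Finset.mem_singleton] at hu hv
      rcases hu with rfl | rfl <;> rcases hv with rfl | rfl
      · exact G.ne_of_adj huv rfl
      · exact hne huv
      · exact hne huv.symm
      · exact G.ne_of_adj huv rfl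
    obtain ⟨D, hDsub, hDmin⟩ := exists_minVC_subset G _ hC0vc
    have hDcard : D.card = n := h D F₁ hDmin hmin1
    have hnb := (key_count hx0inj hy0inj hsep hadj0 hDmin.1).2 hDcard
    have hxiD : x0 i ∉ D := by
      intro hmem
      exact (Finset.mem_sdiff.1 (hDsub hmem)).2 (by simp)
    have hylD : y0 l ∉ D := by
      intro hmem
      exact (Finset.mem_sdiff.1 (hDsub hmem)).2 (by simp)
    have hyjD : y0 j ∈ D := (hDmin.1 _ _ e1).resolve_left hxiD
    have hxjD : x0 j ∉ D := fun hx => hnb j ⟨hx, hyjD⟩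
    rcases hDmin.1 _ _ e2 with h' | h'
    · exact hxjD h'
    · exact hylD h'
  · rintro ⟨n, x, y, hxinj, hyinj, hrx, hry, hadj, hcond⟩ C D hC hD
    have hsep : ∀ i j, x i ≠ y j := by
      intro i j he
      exact hV1 (x i) (hrx ▸ Set.mem_range_self i) (by rw [he]; exact hry ▸ Set.mem_range_self j)
    suffices hall : ∀ E : Finset V, IsMinVC G E → E.card = n by
      rw [hall C hC, hall D hD]
    intro E hE
    have hle := (key_count hxinj hyinj hsep hadj hE.1).1
    have hnb : ∀ i, ¬(x i ∈ E ∧ y i ∈ E) := by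
      rintro i ⟨hxE, hyE⟩
      obtain ⟨w, hw, hwE⟩ := crit_edge hE hxE
      obtain ⟨u, hu, huE⟩ := crit_edge hE hyE
      have hw2 : w ∈ V₂ := by
        rcases hbip _ _ hw with ⟨_, h2⟩ | ⟨h2, _⟩
        · exact h2
        · exact (hV1 _ (hrx ▸ Set.mem_range_self i) h2).elim
      have hu1 : u ∈ V₁ := by
        rcases hbip _ _ hu with ⟨h2, _⟩ | ⟨_, h2⟩
        · exact (hV1 _ h2 (hry ▸ Set.mem_range_self i)).elim
        · exact h2
      obtain ⟨s, hs⟩ : ∃ s, y s = w := by rw [← hry] at hw2; exact hw2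
      obtain ⟨r, hr⟩ : ∃ r, x r = u := by rw [← hrx] at hu1; exact hu1
      subst hs; subst hr
      have hsi : s ≠ i := fun he => hwE (he ▸ hyE)
      have hri : r ≠ i := fun he => huE (he ▸ hxE)
      by_cases hrs : r = s
      · subst hrs
        rcases hE.1 _ _ (hadj r) with h' | h'
        · exact huE h'
        · exact hwE h'
      · have hnew : G.Adj (x r) (y s) := hcond r i s hri (Ne.symm hsi) hrs hu.symm hw
        rcases hE.1 _ _ hnew with h' | h'
        · exact huE h'
        · exact hwE h'
    have hcover : ∀ v : V, (∃ i, x i = v) ∨ (∃ i, y i = v) := by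
      intro v
      have hv : v ∈ V₁ ∪ V₂ := hpart ▸ Set.mem_univ v
      rcases hv with h' | h'
      · left; rw [← hrx] at h'; exact h'
      · right; rw [← hry] at h'; exact h'
    have hle2 : E.card ≤ n := by
      have hsub : E ⊆ Finset.univ.image (fun i => if x i ∈ E then x i else y i) := by
        intro v hv
        rcases hcover v with ⟨i, hi⟩ | ⟨i, hi⟩
        · subst hi; exact Finset.mem_image.2 ⟨i, Finset.mem_univ i, by simp [hv]⟩
        · subst hi
          have hx : x i ∉ E := fun hx => hnb i ⟨hx, hv⟩
          exact Finset.mem_image.2 ⟨i, Finset.mem_univ i, by simp [hx]⟩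
      calc E.card ≤ _ := Finset.card_le_card hsub
        _ ≤ (Finset.univ : Finset (Fin n)).card := Finset.card_image_le
        _ = n := by simp
    omega
end

section
/- Let G be an unmixed bipartite graph with pure order {x₁,...,xₙ} ∪ {y₁,...,yₙ} (so {x_i,y_i} ∈ E(G) for all i). Then every minimal vertex cover of G has the form {x_{i_1},...,x_{i_s}, y_{i_{s+1}},...,y_{i_n}} where {i_1,...,i_n} = {1,...,n}; i.e. each minimal vertex cover contains exactly one vertex from each matched pair {x_i, y_i}. -/
/-- If `G` is an unmixed bipartite graph with pure order `{x₁,…,xₙ} ∪ {y₁,…,yₙ}`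
(so `{xᵢ, yᵢ} ∈ E(G)`, all minimal vertex covers have cardinality `n`), then every
minimal vertex cover contains exactly one vertex from each matched pair `{xᵢ, yᵢ}`. -/
theorem stmt6 {V : Type*} [Fintype V] [DecidableEq V] (G : SimpleGraph V)
    (n : ℕ) (x y : Fin n → V)
    (hx : Function.Injective x) (hy : Function.Injective y)
    (hpart : Set.range x ∪ Set.range y = Set.univ)
    (hdisj : Set.range x ∩ Set.range y = ∅)
    (hbip : ∀ u v : V, G.Adj u v →
      (u ∈ Set.range x ∧ v ∈ Set.range y) ∨ (u ∈ Set.range y ∧ v ∈ Set.range x))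
    (hmatch : ∀ i : Fin n, G.Adj (x i) (y i))
    (hunmixed : ∀ C : Finset V, IsMinVC G C → C.card = n) :
    ∀ C : Finset V, IsMinVC G C → ∀ i : Fin n, (x i ∈ C ↔ y i ∉ C) := by
  intro C hmin i
  have hxy : ∀ i j : Fin n, x i ≠ y j := by
    intro i j h
    have : x i ∈ Set.range x ∩ Set.range y := ⟨⟨i, rfl⟩, ⟨j, h.symm⟩⟩
    rw [hdisj] at this; exact this
  set P : Fin n → Finset V := fun i => {x i, y i} with hP
  have hPdisj : ∀ i j : Fin n, i ≠ j → Disjoint (C ∩ P i) (C ∩ P j) := by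
    intro i j hij
    apply Finset.disjoint_left.2
    intro a hai haj
    simp only [hP, Finset.mem_inter, Finset.mem_insert, Finset.mem_singleton] at hai haj
    rcases hai.2 with h1 | h1 <;> rcases haj.2 with h2 | h2
    · exact hij (hx (h1 ▸ h2 ▸ rfl))
    · exact hxy i j (h1 ▸ h2 ▸ rfl)
    · exact hxy j i (h2 ▸ h1 ▸ rfl)
    · exact hij (hy (h1 ▸ h2 ▸ rfl))
  have hCeq : C = Finset.univ.biUnion (fun i => C ∩ P i) := by
    ext v
    simp only [Finset.mem_biUnion, Finset.mem_univ, true_and, Finset.mem_inter]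
    constructor
    · intro hv
      have : v ∈ Set.range x ∪ Set.range y := by rw [hpart]; trivial
      rcases this with ⟨j, rfl⟩ | ⟨j, rfl⟩
      · exact ⟨j, hv, by simp [hP]⟩
      · exact ⟨j, hv, by simp [hP]⟩
    · rintro ⟨j, hv, _⟩; exact hv
  have hcard : ∑ j : Fin n, (C ∩ P j).card = n := by
    rw [← Finset.card_biUnion (fun i _ j _ hij => hPdisj i j hij), ← hCeq,
      hunmixed C hmin]
  have hge : ∀ j : Fin n, 1 ≤ (C ∩ P j).card := by
    intro j
    rcases hmin.1 (x j) (y j) (hmatch j) with h | h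
    · exact Finset.card_pos.2 ⟨x j, by simp [hP, h]⟩
    · exact Finset.card_pos.2 ⟨y j, by simp [hP, h]⟩
  have hone : ∀ j : Fin n, (C ∩ P j).card = 1 := by
    intro j
    by_contra h
    have h2 : 1 < (C ∩ P j).card := lt_of_le_of_ne (hge j) (Ne.symm h)
    have : (Finset.univ : Finset (Fin n)).card • 1 < ∑ j : Fin n, (C ∩ P j).card := by
      calc (Finset.univ : Finset (Fin n)).card • 1
          = ∑ _j : Fin n, 1 := by simp
        _ < ∑ j : Fin n, (C ∩ P j).card :=
            Finset.sum_lt_sum (fun k _ => hge k) ⟨j, Finset.mem_univ j, h2⟩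
    simp [hcard] at this
  have h1 := hone i
  constructor
  · intro hxC hyC
    have : ({x i, y i} : Finset V) ⊆ C ∩ P i := by
      intro a ha
      simp only [Finset.mem_insert, Finset.mem_singleton] at ha
      rcases ha with rfl | rfl <;> simp [hP, hxC, hyC]
    have h2 : ({x i, y i} : Finset V).card = 2 := Finset.card_pair (hxy i i)
    have := Finset.card_le_card this
    omega
  · intro hyC
    rcases hmin.1 (x i) (y i) (hmatch i) with h | h
    · exact h
    · exact absurd h hyC
end

section
/- Let G be an unmixed bipartite graph with pure order of vertices {x₁,...,xₙ} ∪ {y₁,...,yₙ} and let N_G(x_i) = {y_i, y_{i_1},...,y_{i_{r_i}}}. Then the vertices x_{i_1},...,x_{i_{r_i}} are isolated in the graph G \ N_G[x_i]. -/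
/-- Let `G` be an unmixed bipartite graph with pure order `{x₁,…,xₙ} ∪ {y₁,…,yₙ}`
and let `N_G(xᵢ) = {yᵢ, y_{i₁}, …, y_{i_{rᵢ}}}`.  Then the vertices
`x_{i₁}, …, x_{i_{rᵢ}}` are isolated in `G \ N_G[xᵢ]`, i.e. all their neighbors
lie in the closed neighborhood of `xᵢ`. -/
theorem stmt8 {V : Type*} [Fintype V] [DecidableEq V] (G : SimpleGraph V)
    (n : ℕ) (x y : Fin n → V)
    (hx : Function.Injective x) (hy : Function.Injective y)
    (hpart : Set.range x ∪ Set.range y = Set.univ)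
    (hdisj : Set.range x ∩ Set.range y = ∅)
    (hbip : ∀ u v : V, G.Adj u v →
      (u ∈ Set.range x ∧ v ∈ Set.range y) ∨ (u ∈ Set.range y ∧ v ∈ Set.range x))
    (hmatch : ∀ a : Fin n, G.Adj (x a) (y a))
    (hpure : ∀ a b c : Fin n, a ≠ b → b ≠ c → a ≠ c →
      G.Adj (x a) (y b) → G.Adj (x b) (y c) → G.Adj (x a) (y c))
    (hunmixed : ∀ C : Finset V, IsMinVC G C → C.card = n)
    (i : Fin n) (T : Finset (Fin n)) (hiT : i ∉ T)
    (hN : G.neighborSet (x i) = y '' {j : Fin n | j = i ∨ j ∈ T}) :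
    ∀ j ∈ T, ∀ v : V, G.Adj (x j) v →
      v ∈ insert (x i) (G.neighborSet (x i)) := by
  intro j hjT v hadj
  -- v is some y c
  obtain ⟨c, rfl⟩ : v ∈ Set.range y := by
    rcases hbip _ _ hadj with ⟨_, hv⟩ | ⟨hxj, _⟩
    · exact hv
    · have : x j ∈ Set.range x ∩ Set.range y := ⟨⟨j, rfl⟩, hxj⟩
      rw [hdisj] at this
      exact absurd this (Set.notMem_empty _)
  have hij : G.Adj (x i) (y j) := by
    have : y j ∈ G.neighborSet (x i) := by
      rw [hN]; exact ⟨j, Or.inr hjT, rfl⟩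
    exact this
  have hji : j ≠ i := fun h => hiT (h ▸ hjT)
  right
  by_cases hci : c = i
  · rw [hci]; exact hmatch i
  by_cases hcj : c = j
  · rw [hcj]; exact hij
  · exact hpure i j c hji.symm (Ne.symm hcj) (Ne.symm hci) hij hadj
end

section
/- Let G be an unmixed bipartite graph with pure order {x₁,...,xₙ} ∪ {y₁,...,yₙ}, and let x_i be a vertex of minimal degree with N_G(x_i) = {y_i, y_{i_1},...,y_{i_{r_i}}}. Then N_G(y_i) = N_G(y_{i_1}) = ... = N_G(y_{i_{r_i}}), i.e. all the neighbors of x_i have the same neighborhood in G. -/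
/-- Let `G` be an unmixed bipartite graph with pure order `{x₁,…,xₙ} ∪ {y₁,…,yₙ}`,
let `xᵢ` be a vertex of minimal degree with `N_G(xᵢ) = {yᵢ, y_{i₁}, …, y_{i_{rᵢ}}}`.
Then all the neighbors of `xᵢ` have the same neighborhood in `G`. -/
theorem stmt9 {V : Type*} [Fintype V] [DecidableEq V] (G : SimpleGraph V)
    (n : ℕ) (x y : Fin n → V)
    (hx : Function.Injective x) (hy : Function.Injective y)
    (hpart : Set.range x ∪ Set.range y = Set.univ)
    (hdisj : Set.range x ∩ Set.range y = ∅)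
    (hbip : ∀ u v : V, G.Adj u v →
      (u ∈ Set.range x ∧ v ∈ Set.range y) ∨ (u ∈ Set.range y ∧ v ∈ Set.range x))
    (hmatch : ∀ a : Fin n, G.Adj (x a) (y a))
    (hpure : ∀ a b c : Fin n, a ≠ b → b ≠ c → a ≠ c →
      G.Adj (x a) (y b) → G.Adj (x b) (y c) → G.Adj (x a) (y c))
    (hunmixed : ∀ C : Finset V, IsMinVC G C → C.card = n)
    (i : Fin n) (T : Finset (Fin n)) (hiT : i ∉ T)
    (hN : G.neighborSet (x i) = y '' {j : Fin n | j = i ∨ j ∈ T})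
    (hmin : ∀ v : V, (G.neighborSet (x i)).ncard ≤ (G.neighborSet v).ncard) :
    ∀ j k : Fin n, (j = i ∨ j ∈ T) → (k = i ∨ k ∈ T) →
      G.neighborSet (y j) = G.neighborSet (y k) := by
  -- x i is adjacent to y j for every j in {i} ∪ T
  have hadjS : ∀ j : Fin n, (j = i ∨ j ∈ T) → G.Adj (x i) (y j) := by
    intro j hj
    have : y j ∈ G.neighborSet (x i) := by rw [hN]; exact ⟨j, hj, rfl⟩
    exact this
  -- every neighbor of an x-vertex is a y-vertex
  have hnx : ∀ (a : Fin n) (v : V), G.Adj (x a) v → ∃ c, v = y c := by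
    intro a v hv
    rcases hbip _ _ hv with ⟨_, ⟨c, hc⟩⟩ | ⟨⟨c, hc⟩, _⟩
    · exact ⟨c, hc.symm⟩
    · exfalso
      have : x a ∈ Set.range x ∩ Set.range y := ⟨⟨a, rfl⟩, ⟨c, hc⟩⟩
      rw [hdisj] at this; exact this
  -- every neighbor of a y-vertex is an x-vertex
  have hny : ∀ (a : Fin n) (v : V), G.Adj (y a) v → ∃ c, v = x c := by
    intro a v hv
    rcases hbip _ _ hv with ⟨⟨c, hc⟩, _⟩ | ⟨_, ⟨c, hc⟩⟩
    · exfalso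
      have : y a ∈ Set.range x ∩ Set.range y := ⟨⟨c, hc⟩, ⟨a, rfl⟩⟩
      rw [hdisj] at this; exact this
    · exact ⟨c, hc.symm⟩
  -- N(x j) ⊆ N(x i) for all j in {i} ∪ T
  have hsub : ∀ j : Fin n, (j = i ∨ j ∈ T) →
      G.neighborSet (x j) ⊆ G.neighborSet (x i) := by
    intro j hj v hv
    rcases hj with rfl | hjT
    · exact hv
    have hij : i ≠ j := fun h => hiT (h ▸ hjT)
    have hv' : G.Adj (x j) v := hv
    obtain ⟨c, rfl⟩ := hnx j v hv'
    by_cases hci : c = i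
    · subst hci; exact hmatch c
    by_cases hcj : c = j
    · subst hcj; exact hadjS c (Or.inr hjT)
    · exact hpure i j c hij (fun h => hcj h.symm) (fun h => hci h.symm)
        (hadjS j (Or.inr hjT)) hv'
  -- hence equality by minimal degree
  have heq : ∀ j : Fin n, (j = i ∨ j ∈ T) →
      G.neighborSet (x j) = G.neighborSet (x i) := by
    intro j hj
    exact Set.eq_of_subset_of_ncard_le (hsub j hj) (hmin (x j)) (Set.toFinite _)
  -- one-sided inclusion for the y-neighborhoods
  have key : ∀ j k : Fin n, (j = i ∨ j ∈ T) → (k = i ∨ k ∈ T) →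
      G.neighborSet (y j) ⊆ G.neighborSet (y k) := by
    intro j k hj hk v hv
    have hv' : G.Adj (y j) v := hv
    obtain ⟨a, rfl⟩ := hny j v hv'
    by_cases hjk : j = k
    · subst hjk; exact hv
    have hxjk : G.Adj (x j) (y k) := by
      have : y k ∈ G.neighborSet (x j) := by rw [heq j hj]; exact hadjS k hk
      exact this
    by_cases haS : a = i ∨ a ∈ T
    · have h2 : y k ∈ G.neighborSet (x a) := by rw [heq a haS]; exact hadjS k hk
      have h3 : G.Adj (x a) (y k) := h2
      exact h3.symm
    · have haj : a ≠ j := fun h => haS (h ▸ hj)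
      have hak : a ≠ k := fun h => haS (h ▸ hk)
      exact (hpure a j k haj hjk hak hv'.symm hxjk).symm
  intro j k hj hk
  exact Set.Subset.antisymm (key j k hj hk) (key k j hk hj)
end

section
/- Let G be an unmixed bipartite graph with pure order {x₁,...,xₙ} ∪ {y₁,...,yₙ}, let x_i be a vertex of minimal degree with N_G(x_i) = {y_i, y_{i_1},...,y_{i_{r_i}}}. Then the induced subgraph G \ N_G[{y₁,...,yₙ} \ {y_i, y_{i_1},...,y_{i_{r_i}}}] is the complete bipartite graph with bipartition {x_i, x_{i_1},...,x_{i_{r_i}}} ∪ {y_i, y_{i_1},...,y_{i_{r_i}}}. -/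
/-- The closed neighborhood of a set of vertices `W`. -/
def ClosedNbhdSet {V : Type*} (G : SimpleGraph V) (W : Set V) : Set V :=
  W ∪ {u | ∃ w ∈ W, G.Adj u w}

/-- Let `G` be an unmixed bipartite graph with pure order `{x₁,…,xₙ} ∪ {y₁,…,yₙ}`,
`xᵢ` of minimal degree with `N_G(xᵢ) = {yᵢ, y_{i₁}, …, y_{i_{rᵢ}}}`.  Then
`G \ N_G[{y₁,…,yₙ} \ {yᵢ, y_{i₁},…,y_{i_{rᵢ}}}]` is the complete bipartite graph
with bipartition `{xᵢ, x_{i₁},…,x_{i_{rᵢ}}} ∪ {yᵢ, y_{i₁},…,y_{i_{rᵢ}}}`. -/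
theorem stmt10 {V : Type*} [Fintype V] [DecidableEq V] (G : SimpleGraph V)
    (n : ℕ) (x y : Fin n → V)
    (hx : Function.Injective x) (hy : Function.Injective y)
    (hpart : Set.range x ∪ Set.range y = Set.univ)
    (hdisj : Set.range x ∩ Set.range y = ∅)
    (hbip : ∀ u v : V, G.Adj u v →
      (u ∈ Set.range x ∧ v ∈ Set.range y) ∨ (u ∈ Set.range y ∧ v ∈ Set.range x))
    (hmatch : ∀ a : Fin n, G.Adj (x a) (y a))
    (hpure : ∀ a b c : Fin n, a ≠ b → b ≠ c → a ≠ c →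
      G.Adj (x a) (y b) → G.Adj (x b) (y c) → G.Adj (x a) (y c))
    (hunmixed : ∀ C : Finset V, IsMinVC G C → C.card = n)
    (i : Fin n) (T : Finset (Fin n)) (hiT : i ∉ T)
    (hN : G.neighborSet (x i) = y '' {j : Fin n | j = i ∨ j ∈ T})
    (hmin : ∀ v : V, (G.neighborSet (x i)).ncard ≤ (G.neighborSet v).ncard) :
    {v : V | v ∉ ClosedNbhdSet G (y '' {j : Fin n | ¬ (j = i ∨ j ∈ T)})} =
        (x '' {j : Fin n | j = i ∨ j ∈ T}) ∪ (y '' {j : Fin n | j = i ∨ j ∈ T}) ∧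
      ∀ j k : Fin n, (j = i ∨ j ∈ T) → (k = i ∨ k ∈ T) → G.Adj (x j) (y k) := by
  have hnoyy : ∀ a b : Fin n, ¬ G.Adj (y a) (y b) := by
    intro a b hab
    rcases hbip _ _ hab with ⟨hya, _⟩ | ⟨_, hyb⟩
    · exact Set.eq_empty_iff_forall_notMem.mp hdisj (y a) ⟨hya, ⟨a, rfl⟩⟩
    · exact Set.eq_empty_iff_forall_notMem.mp hdisj (y b) ⟨hyb, ⟨b, rfl⟩⟩
  have hadj_i : ∀ k : Fin n, (k = i ∨ k ∈ T) → G.Adj (x i) (y k) := by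
    intro k hk
    have : y k ∈ G.neighborSet (x i) := by rw [hN]; exact ⟨k, hk, rfl⟩
    exact this
  have hnbhd : ∀ j : Fin n, (j = i ∨ j ∈ T) →
      G.neighborSet (x j) = y '' {j : Fin n | j = i ∨ j ∈ T} := by
    intro j hj
    rcases hj with rfl | hj
    · exact hN
    · have hji : j ≠ i := fun h => hiT (h ▸ hj)
      have hsub : G.neighborSet (x j) ⊆ G.neighborSet (x i) := by
        intro v hv
        have hv' : G.Adj (x j) v := hv
        rcases hbip _ _ hv' with ⟨_, ⟨c, rfl⟩⟩ | ⟨hxy, _⟩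
        · by_cases hci : c = i
          · rw [hci]; exact hmatch i
          · by_cases hcj : c = j
            · rw [hcj]; exact hadj_i j (Or.inr hj)
            · exact hpure i j c (Ne.symm hji) (fun h => hcj h.symm) (fun h => hci h.symm)
                (hadj_i j (Or.inr hj)) hv'
        · exact absurd (Set.eq_empty_iff_forall_notMem.mp hdisj (x j) ⟨⟨j, rfl⟩, hxy⟩) id
      have heq := Set.eq_of_subset_of_ncard_le hsub (hmin (x j)) (Set.toFinite _)
      rw [heq, hN]
  have claim2 : ∀ j k : Fin n, (j = i ∨ j ∈ T) → (k = i ∨ k ∈ T) → G.Adj (x j) (y k) := by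
    intro j k hj hk
    have : y k ∈ G.neighborSet (x j) := by rw [hnbhd j hj]; exact ⟨k, hk, rfl⟩
    exact this
  refine ⟨?_, claim2⟩
  ext v
  simp only [Set.mem_setOf_eq, ClosedNbhdSet, Set.mem_union]
  constructor
  · intro hv
    rw [not_or] at hv
    obtain ⟨hv1, hv2⟩ := hv
    have hvu : v ∈ Set.range x ∪ Set.range y := hpart ▸ Set.mem_univ v
    rcases hvu with ⟨j, rfl⟩ | ⟨j, rfl⟩
    · left
      refine ⟨j, ?_, rfl⟩
      by_contra hjS
      exact hv2 ⟨y j, ⟨j, hjS, rfl⟩, hmatch j⟩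
    · right
      refine ⟨j, ?_, rfl⟩
      by_contra hjS
      exact hv1 ⟨j, hjS, rfl⟩
  · rintro (⟨j, hj, rfl⟩ | ⟨j, hj, rfl⟩) <;> rintro (⟨c, hc, hcv⟩ | ⟨w, ⟨c, hc, rfl⟩, hadj⟩)
    · exact Set.eq_empty_iff_forall_notMem.mp hdisj (x j) ⟨⟨j, rfl⟩, ⟨c, hcv⟩⟩
    · have hmem : y c ∈ G.neighborSet (x j) := hadj
      rw [hnbhd j hj] at hmem
      obtain ⟨c', hc', hcc⟩ := hmem
      exact hc (hy hcc ▸ hc')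
    · exact hc (hy hcv ▸ hj)
    · exact hnoyy j c hadj
end

section
/- Let λ = (λ₁ ≥ λ₂ ≥ ... ≥ λₙ) be a partition with λₙ ≥ 1 and let I_λ be the edge ideal of the Ferrers graph G_λ in R = k[x₁,...,xₙ, y₁,...,y_{λ₁}]. Then I_λ = ∩_{i=1}^{n+1} (x₁,...,x_{i−1}, y₁,...,y_{λ_i}), where λ_{n+1} = 0 (so the i = 1 term is (y₁,...,y_{λ₁}) and the i = n+1 term is (x₁,...,xₙ)). -/
open MvPolynomial

lemma stmt15_aux {σ : Type*} [DecidableEq σ] {a b : σ} (hab : a ≠ b) (d : σ →₀ ℕ) :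
    Finsupp.single a 1 + Finsupp.single b 1 ≤ d ↔ d a ≠ 0 ∧ d b ≠ 0 := by
  rw [Finsupp.le_def]
  constructor
  · intro h
    constructor
    · have := h a; simp [Finsupp.single_apply, hab] at this; omega
    · have := h b; simp [Finsupp.single_apply, hab.symm] at this; omega
  · rintro ⟨ha, hb⟩ x
    simp only [Finsupp.add_apply, Finsupp.single_apply]
    by_cases hxa : a = x <;> by_cases hxb : b = x <;>
      simp_all <;> omega

/-- For a partition `λ₁ ≥ … ≥ λₙ ≥ 1`, the Ferrers edge ideal
`I_λ = (xᵢ y_j : j ≤ λᵢ)` equals the intersection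
`⋂_{i=1}^{n+1} (x₁,…,x_{i−1}, y₁,…,y_{λᵢ})` (with `λ_{n+1} = 0`).
Here indices are 0-based: the term for `t : Fin (n+1)` is
`(x₁,…,x_t, y₁,…,y_{λ_{t+1}})`. -/
theorem stmt15 (k : Type*) [Field k] (n m : ℕ) (hn : 0 < n)
    (lam : Fin n → ℕ) (hanti : ∀ i j : Fin n, i ≤ j → lam j ≤ lam i)
    (hpos : ∀ i : Fin n, 1 ≤ lam i) (hm : lam ⟨0, hn⟩ = m)
    (I : Ideal (MvPolynomial (Fin n ⊕ Fin m) k))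
    (hI : I = Ideal.span {f | ∃ (i : Fin n) (j : Fin m),
      (j : ℕ) < lam i ∧ f = X (Sum.inl i) * X (Sum.inr j)}) :
    I = ⨅ t : Fin (n + 1),
      Ideal.span
        ({f | ∃ p : Fin n, (p : ℕ) < (t : ℕ) ∧ f = X (Sum.inl p)} ∪
         {f | ∃ q : Fin m,
            (q : ℕ) < (if h : (t : ℕ) < n then lam ⟨t, h⟩ else 0) ∧
            f = X (Sum.inr q)}) := by
  subst hI
  -- rewrite the left generating set as an image of monomials
  have hgenL : {f : MvPolynomial (Fin n ⊕ Fin m) k | ∃ (i : Fin n) (j : Fin m),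
      (j : ℕ) < lam i ∧ f = X (Sum.inl i) * X (Sum.inr j)}
      = (fun s => (monomial s (1 : k))) ''
        {d | ∃ (i : Fin n) (j : Fin m), (j : ℕ) < lam i ∧
          d = Finsupp.single (Sum.inl i) 1 + Finsupp.single (Sum.inr j) 1} := by
    ext f
    constructor
    · rintro ⟨i, j, hij, rfl⟩
      refine ⟨_, ⟨i, j, hij, rfl⟩, ?_⟩
      show (monomial (Finsupp.single (Sum.inl i) 1 + Finsupp.single (Sum.inr j) 1) (1:k)) = _
      rw [monomial_add_single, pow_one]; rfl
    · rintro ⟨d, ⟨i, j, hij, rfl⟩, rfl⟩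
      refine ⟨i, j, hij, ?_⟩
      show (monomial (Finsupp.single (Sum.inl i) 1 + Finsupp.single (Sum.inr j) 1) (1:k)) = _
      rw [monomial_add_single, pow_one]; rfl
  have hgenR : ∀ t : Fin (n + 1),
      ({f : MvPolynomial (Fin n ⊕ Fin m) k | ∃ p : Fin n, (p : ℕ) < (t : ℕ) ∧ f = X (Sum.inl p)} ∪
       {f | ∃ q : Fin m,
          (q : ℕ) < (if h : (t : ℕ) < n then lam ⟨t, h⟩ else 0) ∧ f = X (Sum.inr q)})
      = X '' ({x | ∃ p : Fin n, (p : ℕ) < (t : ℕ) ∧ x = Sum.inl p} ∪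
              {x | ∃ q : Fin m,
                (q : ℕ) < (if h : (t : ℕ) < n then lam ⟨t, h⟩ else 0) ∧ x = Sum.inr q}) := by
    intro t
    ext f
    constructor
    · rintro (⟨p, hp, rfl⟩ | ⟨q, hq, rfl⟩)
      · exact ⟨Sum.inl p, Or.inl ⟨p, hp, rfl⟩, rfl⟩
      · exact ⟨Sum.inr q, Or.inr ⟨q, hq, rfl⟩, rfl⟩
    · rintro ⟨x, (⟨p, hp, rfl⟩ | ⟨q, hq, rfl⟩), rfl⟩
      · exact Or.inl ⟨p, hp, rfl⟩
      · exact Or.inr ⟨q, hq, rfl⟩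
  ext f
  rw [hgenL, mem_ideal_span_monomial_image, Ideal.mem_iInf]
  simp_rw [hgenR, mem_ideal_span_X_image]
  constructor
  · -- from edge ideal membership to the intersection
    intro h t d hd
    obtain ⟨s, ⟨i, j, hij, rfl⟩, hs⟩ := h d hd
    rw [stmt15_aux (by simp)] at hs
    by_cases hit : (i : ℕ) < (t : ℕ)
    · exact ⟨Sum.inl i, Or.inl ⟨i, hit, rfl⟩, hs.1⟩
    · refine ⟨Sum.inr j, Or.inr ⟨j, ?_, rfl⟩, hs.2⟩
      have htn : (t : ℕ) < n := lt_of_le_of_lt (not_lt.mp hit) i.isLt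
      rw [dif_pos htn]
      exact lt_of_lt_of_le hij (hanti ⟨t, htn⟩ i (not_lt.mp hit))
  · intro h d hd
    by_cases hx : ∃ i : Fin n, d (Sum.inl i) ≠ 0
    · -- take the minimal such i
      classical
      obtain ⟨i₀, hi₀⟩ := hx
      have hex : ∃ v : ℕ, ∃ hv : v < n, d (Sum.inl ⟨v, hv⟩) ≠ 0 := ⟨i₀, i₀.isLt, by simpa⟩
      obtain ⟨v, hv, hdv⟩ := hex
      -- minimal v
      let P : ℕ → Prop := fun v => ∃ hv : v < n, d (Sum.inl ⟨v, hv⟩) ≠ 0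
      have hP : P v := ⟨hv, hdv⟩
      have hfind := Nat.find_spec (⟨v, hP⟩ : ∃ v, P v)
      obtain ⟨hvn, hdmin⟩ := hfind
      set v₀ := Nat.find (⟨v, hP⟩ : ∃ v, P v) with hv₀
      have hmin : ∀ w < v₀, ¬ P w := fun w hw => Nat.find_min _ hw
      -- use t = v₀
      obtain ⟨x, hx', hx0⟩ := h ⟨v₀, Nat.lt_succ_of_lt hvn⟩ d hd
      rcases hx' with ⟨p, hp, rfl⟩ | ⟨q, hq, rfl⟩
      · exact absurd ⟨p.isLt, by simpa using hx0⟩ (hmin p hp)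
      · rw [dif_pos hvn] at hq
        exact ⟨_, ⟨⟨v₀, hvn⟩, q, hq, rfl⟩, (stmt15_aux (by simp) d).mpr ⟨hdmin, hx0⟩⟩
    · push_neg at hx
      obtain ⟨x, hx', hx0⟩ := h (Fin.last n) d hd
      rcases hx' with ⟨p, hp, rfl⟩ | ⟨q, hq, rfl⟩
      · exact absurd (hx p) hx0
      · rw [dif_neg (by simp)] at hq
        exact absurd hq (Nat.not_lt_zero _)
end

section
/- Let λ = (λ₁ ≥ ... ≥ λₙ) be a partition with λₙ ≥ 1 such that the Ferrers edge ideal I_λ ⊂ R = k[x₁,...,xₙ,y₁,...,y_{λ₁}] is unmixed. Then λ_j + j − 1 = n for every j in the index set {c₁,...,c_k} of distinct values of λ, where c₁ = 1 and c_i marks the positions where λ strictly decreases; equivalently, every minimal prime (x₁,...,x_{c_i−1}, y₁,...,y_{λ_{c_i}}) of I_λ has height n. -/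
/-!
Both `(x₁, …, x_t, y₁, …, y_{λ_t})`, for a (`0`-based) position `t` where `λ` drops, and
`(x₁, …, xₙ)` are minimal vertex covers of the Ferrers graph, hence minimal primes of `I_λ`. In a Noetherian
polynomial ring the height of a prime generated by variables depends only on their number
(permute the variables) and grows strictly with it (add a variable), since heights are finite.
So unmixedness forces `t + λ_t = n`.
-/

open MvPolynomial

/-- The height of an ideal: the infimum of the heights (in the prime spectrum)
of the primes containing it. -/
noncomputable def idealHeight {R : Type*} [CommRing R] (I : Ideal R) : ℕ∞ :=
  sInf {h : ℕ∞ | ∃ p : PrimeSpectrum R, I ≤ p.asIdeal ∧ Order.height p = h}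

theorem Ideal.IsPrime.idealHeight_eq_height {R : Type*} [CommRing R] {p : Ideal R}
    (hp : p.IsPrime) : idealHeight p = p.height := by
  refine le_antisymm (sInf_le ⟨⟨p, hp⟩, le_rfl, (PrimeSpectrum.height_eq_orderHeight _).symm⟩) ?_
  refine le_sInf ?_
  rintro _ ⟨q, hpq, rfl⟩
  rw [← PrimeSpectrum.height_eq_orderHeight]
  exact Ideal.height_mono hpq

namespace MvPolynomial

variable {σ R : Type*} [CommRing R]

theorem span_X_image_eq_ker (S : Set σ) [DecidablePred (· ∈ S)] :
    Ideal.span (X '' S) =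
      RingHom.ker (aeval (R := R) fun s => if s ∈ S then (0 : MvPolynomial σ R) else X s) := by
  set J := Ideal.span (X '' S : Set (MvPolynomial σ R))
  apply le_antisymm
  · rw [Ideal.span_le]
    rintro _ ⟨s, hs, rfl⟩
    simp [hs]
  · intro f hf
    -- killing the variables of `S` does not change anything modulo `J`
    have hmod : (Ideal.Quotient.mkₐ R J).comp (aeval fun s => if s ∈ S then 0 else X s) =
        Ideal.Quotient.mkₐ R J := by
      ext s
      by_cases hs : s ∈ S
      · have hXs : (X s : MvPolynomial σ R) ∈ J := Ideal.subset_span (Set.mem_image_of_mem X hs)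
        simpa [hs] using (Ideal.Quotient.eq_zero_iff_mem.mpr hXs).symm
      · simp [hs]
    rw [← Ideal.Quotient.eq_zero_iff_mem, ← Ideal.Quotient.mkₐ_eq_mk R, ← hmod,
      AlgHom.comp_apply, RingHom.mem_ker.mp hf, map_zero]

theorem isPrime_span_X_image [IsDomain R] (S : Set σ) :
    (Ideal.span (X '' S : Set (MvPolynomial σ R))).IsPrime := by
  classical
  rw [span_X_image_eq_ker]
  exact RingHom.ker_isPrime _

theorem X_mem_span_X_image_iff [Nontrivial R] {S : Set σ} {s : σ} :
    (X s : MvPolynomial σ R) ∈ Ideal.span (X '' S) ↔ s ∈ S := by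
  refine ⟨fun h => ?_, fun h => Ideal.subset_span (Set.mem_image_of_mem X h)⟩
  obtain ⟨i, hi, hne⟩ := mem_ideal_span_X_image.mp h (Finsupp.single s 1) (by simp [support_X])
  rwa [← (Finsupp.single_apply_ne_zero.mp hne).1]

theorem span_X_image_mem_minimalPrimes [IsDomain R] {I : Ideal (MvPolynomial σ R)} {S : Set σ}
    (hle : I ≤ Ideal.span (X '' S)) (hcrit : ∀ s ∈ S, ∃ u ∉ S, X s * X u ∈ I) :
    Ideal.span (X '' S) ∈ I.minimalPrimes := by
  refine ⟨⟨isPrime_span_X_image S, hle⟩, fun q ⟨hq, hIq⟩ hqle => ?_⟩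
  rw [Ideal.span_le]
  rintro _ ⟨s, hs, rfl⟩
  obtain ⟨u, hu, hsu⟩ := hcrit s hs
  refine (hq.mem_or_mem (hIq hsu)).resolve_right fun hXu => hu ?_
  exact X_mem_span_X_image_iff.mp (hqle hXu)

theorem map_rename_span_X_image {τ : Type*} (f : σ → τ) (S : Set σ) :
    Ideal.map (rename (R := R) f) (Ideal.span (X '' S)) = Ideal.span (X '' (f '' S)) := by
  rw [Ideal.map_span, Set.image_image, Set.image_image]
  simp only [rename_X]

theorem height_span_X_image_eq_of_card_eq {S T : Finset σ} (h : S.card = T.card) :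
    (Ideal.span (X '' S : Set (MvPolynomial σ R))).height =
      (Ideal.span (X '' T : Set (MvPolynomial σ R))).height := by
  classical
  obtain ⟨e, he⟩ := Equiv.Perm.exists_map_finset_eq S T h
  rw [← RingEquiv.height_map (renameEquiv R e).toRingEquiv, ← he, Finset.coe_map]
  exact congrArg Ideal.height (map_rename_span_X_image e S)

variable [Finite σ] [IsDomain R] [IsNoetherianRing R]

theorem height_span_X_image_lt_of_card_lt {S T : Finset σ} (h : S.card < T.card) :
    (Ideal.span (X '' S : Set (MvPolynomial σ R))).height <
      (Ideal.span (X '' T : Set (MvPolynomial σ R))).height := by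
  obtain ⟨T', hT'T, hT'⟩ := Finset.exists_subset_card_eq h.le
  obtain ⟨t, htT, htT'⟩ := Finset.exists_of_ssubset (hT'T.ssubset_of_ne (by rintro rfl; omega))
  rw [height_span_X_image_eq_of_card_eq hT'.symm]
  have := isPrime_span_X_image (R := R) (T' : Set σ)
  refine Ideal.height_strict_mono_of_isPrime (lt_of_le_of_ne ?_ fun heq => htT' ?_)
  · exact Ideal.span_mono (Set.image_mono (Finset.coe_subset.mpr hT'T))
  · exact X_mem_span_X_image_iff.mp (heq ▸ X_mem_span_X_image_iff.mpr htT)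

theorem card_eq_of_height_span_X_image_eq {S T : Finset σ}
    (h : (Ideal.span (X '' S : Set (MvPolynomial σ R))).height =
      (Ideal.span (X '' T : Set (MvPolynomial σ R))).height) :
    S.card = T.card := by
  rcases lt_trichotomy S.card T.card with hlt | heq | hgt
  · exact absurd h (height_span_X_image_lt_of_card_lt hlt).ne
  · exact heq
  · exact absurd h (height_span_X_image_lt_of_card_lt hgt).ne'

end MvPolynomial

section Ferrers

variable (k : Type*) [Field k] (n m : ℕ)

noncomputable def ferrersIdeal (lam : Fin n → ℕ) : Ideal (MvPolynomial (Fin n ⊕ Fin m) k) :=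
  Ideal.span {f | ∃ (i : Fin n) (j : Fin m),
    (j : ℕ) < lam i ∧ f = X (Sum.inl i) * X (Sum.inr j)}

/-- `{xᵢ | i < a} ∪ {yⱼ | j < b}`, indexed from `0`. -/
def initialVars (a b : ℕ) : Finset (Fin n ⊕ Fin m) :=
  ({i : Fin n | (i : ℕ) < a} : Finset (Fin n)).disjSum {j : Fin m | (j : ℕ) < b}

variable {k n m}

theorem card_initialVars (a b : ℕ) : (initialVars n m a b).card = min n a + min m b := by
  simp [initialVars, Finset.card_disjSum, Fin.card_filter_val_lt]

theorem span_initialVars_mem_minimalPrimes {lam : Fin n → ℕ} (hlam : ∀ i, lam i ≤ m) {a b : ℕ}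
    (hcover : ∀ i : Fin n, a ≤ i → lam i ≤ b) (hx : ∀ i : Fin n, (i : ℕ) < a → b < lam i)
    (hy : ∀ j < b, ∃ i : Fin n, a ≤ i ∧ j < lam i) :
    Ideal.span (X '' (initialVars n m a b : Set (Fin n ⊕ Fin m))) ∈
      (ferrersIdeal k n m lam).minimalPrimes := by
  refine span_X_image_mem_minimalPrimes ?_ ?_
  · rw [ferrersIdeal, Ideal.span_le]
    rintro _ ⟨i, j, hj, rfl⟩
    by_cases hi : (i : ℕ) < a
    · exact Ideal.mul_mem_right _ _ (X_mem_span_X_image_iff.mpr (by simp [initialVars, hi]))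
    · have := hcover i (not_lt.mp hi)
      exact Ideal.mul_mem_left _ _ (X_mem_span_X_image_iff.mpr (by simp [initialVars]; omega))
  · rintro (i | j) hs
    · replace hs : (i : ℕ) < a := by simpa [initialVars] using hs
      exact ⟨.inr ⟨b, (hx i hs).trans_le (hlam i)⟩, by simp [initialVars],
        Ideal.subset_span ⟨i, _, hx i hs, rfl⟩⟩
    · obtain ⟨i, hai, hji⟩ := hy j (by simpa [initialVars] using hs)
      refine ⟨.inl i, by simpa [initialVars] using hai, ?_⟩
      rw [mul_comm]
      exact Ideal.subset_span ⟨i, j, hji, rfl⟩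

end Ferrers

/-- If the Ferrers edge ideal `I_λ` is unmixed (all minimal primes have the same
height), then `λ_j + j − 1 = n` at every position where `λ` starts a new value
(0-based: `λ_t + t = n` whenever `t = 0` or `λ_t < λ_{t−1}`); equivalently, every
minimal prime of `I_λ` has height `n`. -/
theorem stmt17 (k : Type*) [Field k] (n m : ℕ) (hn : 0 < n)
    (lam : Fin n → ℕ) (hanti : ∀ i j : Fin n, i ≤ j → lam j ≤ lam i)
    (hpos : ∀ i : Fin n, 1 ≤ lam i) (hm : lam ⟨0, hn⟩ = m)
    (I : Ideal (MvPolynomial (Fin n ⊕ Fin m) k))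
    (hI : I = Ideal.span {f | ∃ (i : Fin n) (j : Fin m),
      (j : ℕ) < lam i ∧ f = X (Sum.inl i) * X (Sum.inr j)})
    (hunmixed : ∀ p ∈ I.minimalPrimes, ∀ q ∈ I.minimalPrimes,
      idealHeight p = idealHeight q) :
    ∀ t : Fin n,
      ((t : ℕ) = 0 ∨ ∃ s : Fin n, (s : ℕ) + 1 = (t : ℕ) ∧ lam t < lam s) →
      lam t + (t : ℕ) = n := by
  intro t ht
  subst hI
  have hlam : ∀ i, lam i ≤ m := fun i => hm ▸ hanti _ i (by simp [Fin.le_def])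
  have hdrop : ∀ i : Fin n, (i : ℕ) < t → lam t < lam i := by
    intro i hi
    rcases ht with h0 | ⟨s, hst, hlt⟩
    · omega
    · exact hlt.trans_le (hanti i s (by rw [Fin.le_def]; omega))
  have hcorner : Ideal.span (X '' (initialVars n m t (lam t) : Set (Fin n ⊕ Fin m))) ∈
      (ferrersIdeal k n m lam).minimalPrimes :=
    span_initialVars_mem_minimalPrimes hlam (hanti t) hdrop
      (fun j hj => ⟨t, le_rfl, hj⟩)
  have hxs : Ideal.span (X '' (initialVars n m n 0 : Set (Fin n ⊕ Fin m))) ∈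
      (ferrersIdeal k n m lam).minimalPrimes :=
    span_initialVars_mem_minimalPrimes hlam (fun i hi => by omega) (fun i _ => hpos i)
      (fun j hj => by omega)
  have hcard := card_eq_of_height_span_X_image_eq <| by
    simpa only [(isPrime_span_X_image _).idealHeight_eq_height] using hunmixed _ hcorner _ hxs
  rw [card_initialVars, card_initialVars] at hcard
  have := hlam t
  omega
end
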